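/- Let t0 > 0 and let β > 1/2, and set γ(t) = t^{−β}. Then for every continuous non-increasing function S : [t0,∞) → ℝ with S(t) → 0 as t → +∞ there exists a constant H0 > 0, depending only on t0, Λ1, Λ2, β and S(t0), such that for every coefficient c in the class PS(t0,Λ1,Λ2,S,γ) with stabilization constant c∞, every λ > 0, and every solution u of u''(t) + λ² c(t) u(t) = 0 on [t0,∞), the Kowaleskian energy E(t) = u'(t)²/√c∞ + λ²√c∞·u(t)² satisfies (1/H0)·E(t0) ≤ E(t) ≤ H0·E(t0) for all t ≥ t0. -/

import Mathlib

/-!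
For frequencies `λ ≤ λ₀` the energy `E` with frozen coefficient `c∞` satisfies
`|E'| ≤ (λ / √c∞) |c - c∞| E`, so Gronwall's inequality and the stabilization hypothesis bound
`E(t) / E(t₀)` from above and below by `exp (λ₀ S(t₀) / √Λ₁)`.

For `λ ≥ λ₀ := γ(t₀) / Λ₁^{3/2}` one works instead with the adapted energy
`u'² / √c + λ² √c u²` plus the corrector `c' / (2 c^{3/2}) · u u'`. The corrector cancels the
terms of order `γ` in the derivative, leaving `|F'| ≲ γ² F / λ`, and because `λ ≥ λ₀` it changes
the adapted energy by at most a quarter. As `β > 1/2`, `γ² = t^{-2β}` is integrable on `[t₀, ∞)`,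
so Gronwall gives a uniform bound again; adapted and frozen energies agree up to `√(Λ₂ / Λ₁)`.
-/

open Real Set Filter MeasureTheory

/-- The Kowaleskian energy `E(t) = u'(t)²/√c∞ + λ²·√c∞·u(t)²`. -/
noncomputable def kowE (cinf lam : ℝ) (u u' : ℝ → ℝ) (t : ℝ) : ℝ :=
  (u' t) ^ 2 / Real.sqrt cinf + lam ^ 2 * Real.sqrt cinf * (u t) ^ 2

def WithinFactor (C x y : ℝ) : Prop := x ≤ C * y ∧ y ≤ C * x

namespace WithinFactor

variable {C D x y z : ℝ}

theorem symm (h : WithinFactor C x y) : WithinFactor C y x := ⟨h.2, h.1⟩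

theorem trans (hC : 0 ≤ C) (hD : 0 ≤ D) (hxy : WithinFactor C x y) (hyz : WithinFactor D y z) :
    WithinFactor (C * D) x z :=
  ⟨by nlinarith [hxy.1, hyz.1], by nlinarith [hxy.2, hyz.2]⟩

theorem mono (hx : 0 ≤ x) (hy : 0 ≤ y) (hCD : C ≤ D) (h : WithinFactor C x y) :
    WithinFactor D x y :=
  ⟨h.1.trans (by gcongr), h.2.trans (by gcongr)⟩

theorem one_div_mul_le (hC : 0 < C) (h : WithinFactor C x y) : 1 / C * y ≤ x := by
  rw [one_div_mul_eq_div, div_le_iff₀ hC, mul_comm]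
  exact h.2

end WithinFactor

theorem antitoneOn_mul_exp_neg_of_deriv_le {D : Set ℝ} (hD : Convex ℝ D) {f f' Φ φ : ℝ → ℝ}
    (hf : ContinuousOn f D) (hΦ : ContinuousOn Φ D)
    (hf' : ∀ x ∈ interior D, HasDerivAt f (f' x) x) (hΦ' : ∀ x ∈ interior D, HasDerivAt Φ (φ x) x)
    (hle : ∀ x ∈ interior D, f' x ≤ φ x * f x) :
    AntitoneOn (fun x => f x * exp (-Φ x)) D := by
  refine antitoneOn_of_hasDerivWithinAt_nonpos hD (hf.mul hΦ.neg.rexp)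
    (f' := fun x => (f' x - φ x * f x) * exp (-Φ x)) (fun x hx => ?_) (fun x hx => ?_)
  · exact (((hf' x hx).mul (hΦ' x hx).neg.exp).congr_deriv
      (by simp only [Pi.neg_apply]; ring)).hasDerivWithinAt
  · exact mul_nonpos_of_nonpos_of_nonneg (sub_nonpos.2 (hle x hx)) (exp_pos _).le

theorem withinFactor_exp_integral_of_abs_deriv_le {E E' φ : ℝ → ℝ} {a t : ℝ} (hat : a ≤ t)
    (hE : ContinuousOn E (Icc a t)) (hE' : ∀ x ∈ Ioo a t, HasDerivAt E (E' x) x)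
    (hφ : ContinuousOn φ (Icc a t)) (hle : ∀ x ∈ Ioo a t, |E' x| ≤ φ x * E x) :
    WithinFactor (exp (∫ x in a..t, φ x)) (E t) (E a) := by
  set Φ := fun x => ∫ y in a..x, φ y
  have hΦ : ContinuousOn Φ (Icc a t) := by
    have := intervalIntegral.continuousOn_primitive_interval (μ := volume) (a := a) (b := t)
      (f := φ) (by rw [uIcc_of_le hat]; exact hφ.integrableOn_Icc)
    rwa [uIcc_of_le hat] at this
  have hΦ' : ∀ x ∈ Ioo a t, HasDerivAt Φ (φ x) x := fun x hx =>
    intervalIntegral.integral_hasDerivAt_right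
      ((hφ.mono (Icc_subset_Icc_right hx.2.le)).intervalIntegrable_of_Icc hx.1.le)
      ((hφ.mono Ioo_subset_Icc_self).stronglyMeasurableAtFilter isOpen_Ioo x hx)
      (hφ.continuousAt (Icc_mem_nhds hx.1 hx.2))
  rw [← interior_Icc] at hE' hΦ' hle
  have hdec := antitoneOn_mul_exp_neg_of_deriv_le (convex_Icc a t) hE hΦ hE' hΦ'
    fun x hx => (le_abs_self _).trans (hle x hx)
  -- applied to `-E` and `-Φ`: `E · exp Φ` is monotone
  have hinc := antitoneOn_mul_exp_neg_of_deriv_le (convex_Icc a t) hE.neg hΦ.neg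
    (fun x hx => (hE' x hx).neg) (fun x hx => (hΦ' x hx).neg)
    fun x hx => by simp only [Pi.neg_apply]; linarith [neg_abs_le (E' x), hle x hx]
  have ha : a ∈ Icc a t := left_mem_Icc.2 hat
  have ht : t ∈ Icc a t := right_mem_Icc.2 hat
  have hΦa : Φ a = 0 := intervalIntegral.integral_same
  have hupper := hdec ha ht hat
  have hlower := hinc ha ht hat
  simp only [hΦa, neg_zero, exp_zero, mul_one, Pi.neg_apply, neg_neg, exp_neg] at hupper hlower
  constructor
  · rwa [mul_inv_le_iff₀ (exp_pos _), mul_comm] at hupper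
  · rw [mul_comm]; linarith

theorem kowE_nonneg (s lam : ℝ) (u u' : ℝ → ℝ) (t : ℝ) : 0 ≤ kowE s lam u u' t := by
  unfold kowE; positivity

section Energy

variable {s lam : ℝ} {u u' : ℝ → ℝ}

theorem two_mul_abs_mul_le_kowE (hs : 0 < s) (t : ℝ) :
    2 * lam * |u t * u' t| ≤ kowE s lam u u' t := by
  have hs' : 0 < √s := sqrt_pos.2 hs
  rw [kowE, abs_mul, div_add' _ _ _ hs'.ne', le_div_iff₀ hs', ← sq_abs (u t), ← sq_abs (u' t)]
  nlinarith [sq_nonneg (|u' t| - lam * √s * |u t|)]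

theorem kowE_le_div_mul_kowE {s' m M : ℝ} (hm : 0 < m) (hs : m ≤ √s ∧ √s ≤ M)
    (hs' : m ≤ √s' ∧ √s' ≤ M) (t : ℝ) :
    kowE s lam u u' t ≤ M / m * kowE s' lam u u' t := by
  have le_of : ∀ {a b : ℝ}, m ≤ a ∧ a ≤ M → m ≤ b ∧ b ≤ M → a ≤ M / m * b := fun ha hb => by
    rw [div_mul_eq_mul_div, le_div_iff₀ hm]; nlinarith
  have h1 : u' t ^ 2 / √s ≤ M / m * (u' t ^ 2 / √s') := by
    rw [mul_div_assoc', div_le_div_iff₀ (hm.trans_le hs.1) (hm.trans_le hs'.1)]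
    nlinarith [le_of hs' hs, sq_nonneg (u' t)]
  have h2 : lam ^ 2 * √s * u t ^ 2 ≤ M / m * (lam ^ 2 * √s' * u t ^ 2) := by
    nlinarith [le_of hs hs', sq_nonneg (lam * u t)]
  unfold kowE; linarith

theorem kowE_withinFactor {s' m M : ℝ} (hm : 0 < m) (hs : m ≤ √s ∧ √s ≤ M)
    (hs' : m ≤ √s' ∧ √s' ≤ M) (t : ℝ) :
    WithinFactor (M / m) (kowE s lam u u' t) (kowE s' lam u u' t) :=
  ⟨kowE_le_div_mul_kowE hm hs hs' t, kowE_le_div_mul_kowE hm hs' hs t⟩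

end Energy

noncomputable def correctedKowE (c c' : ℝ → ℝ) (lam : ℝ) (u u' : ℝ → ℝ) (t : ℝ) : ℝ :=
  kowE (c t) lam u u' t + c' t / (2 * √(c t) ^ 3) * (u t * u' t)

section AlongSolutions

variable {c c' c'' u u' : ℝ → ℝ} {lam m x : ℝ} {s : Set ℝ}

theorem hasDerivWithinAt_kowE {cinf : ℝ} (hcinf : 0 < cinf) (hu : HasDerivWithinAt u (u' x) s x)
    (hu' : HasDerivWithinAt u' (-(lam ^ 2 * c x * u x)) s x) :
    HasDerivWithinAt (kowE cinf lam u u')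
      (2 * lam ^ 2 * (cinf - c x) * (u x * u' x) / √cinf) s x := by
  have hsq : √cinf ^ 2 = cinf := sq_sqrt hcinf.le
  have hne : √cinf ≠ 0 := (sqrt_pos.2 hcinf).ne'
  refine (((hu'.pow 2).div_const √cinf).add ((hu.pow 2).const_mul (lam ^ 2 * √cinf))).congr_deriv ?_
  set r := √cinf
  rw [← hsq]
  field_simp
  push_cast
  ring

theorem hasDerivWithinAt_correctedKowE (hcx : 0 < c x) (hc : HasDerivWithinAt c (c' x) s x)
    (hc' : HasDerivWithinAt c' (c'' x) s x) (hu : HasDerivWithinAt u (u' x) s x)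
    (hu' : HasDerivWithinAt u' (-(lam ^ 2 * c x * u x)) s x) :
    HasDerivWithinAt (correctedKowE c c' lam u u')
      ((c'' x / (2 * √(c x) ^ 3) - 3 * c' x ^ 2 / (4 * √(c x) ^ 5)) * (u x * u' x)) s x := by
  have hsq : √(c x) ^ 2 = c x := sq_sqrt hcx.le
  have hne : √(c x) ≠ 0 := (sqrt_pos.2 hcx).ne'
  have hsqrt : HasDerivWithinAt (fun y => √(c y)) (c' x / (2 * √(c x))) s x := hc.sqrt hcx.ne'
  have hkow := ((hu'.pow 2).div hsqrt hne).add ((hsqrt.const_mul (lam ^ 2)).mul (hu.pow 2))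
  have hcorr := (hc'.div ((hsqrt.pow 3).const_mul 2) (by simp [hne])).mul (hu.mul hu')
  refine (hkow.add hcorr).congr_deriv ?_
  simp only [Pi.pow_apply, Pi.mul_apply, Pi.div_apply]
  set r := √(c x)
  rw [← hsq]
  field_simp
  push_cast
  ring

theorem abs_mul_le_kowE_div (hlam : 0 < lam) (hcx : 0 < c x) :
    |u x * u' x| ≤ kowE (c x) lam u u' x / (2 * lam) := by
  rw [le_div_iff₀ (by positivity), mul_comm]
  exact two_mul_abs_mul_le_kowE hcx x

theorem abs_correctedKowE_sub_kowE_le (hlam : 0 < lam) (hm : 0 < m) (hmc : m ≤ √(c x))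
    (hc' : |c' x| ≤ lam * m ^ 3) :
    |correctedKowE c c' lam u u' x - kowE (c x) lam u u' x| ≤ kowE (c x) lam u u' x / 4 := by
  have hs : 0 < √(c x) := hm.trans_le hmc
  have hm3 : m ^ 3 ≤ √(c x) ^ 3 := pow_le_pow_left₀ hm.le hmc 3
  have hcoef : |c' x / (2 * √(c x) ^ 3)| ≤ lam / 2 := by
    rw [abs_div, abs_of_pos (a := 2 * √(c x) ^ 3) (by positivity),
      div_le_div_iff₀ (by positivity) two_pos]
    nlinarith
  calc |correctedKowE c c' lam u u' x - kowE (c x) lam u u' x|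
      = |c' x / (2 * √(c x) ^ 3)| * |u x * u' x| := by
        rw [correctedKowE, add_sub_cancel_left, abs_mul]
    _ ≤ lam / 2 * (kowE (c x) lam u u' x / (2 * lam)) :=
        mul_le_mul hcoef (abs_mul_le_kowE_div hlam (sqrt_pos.1 hs)) (abs_nonneg _) (by positivity)
    _ = kowE (c x) lam u u' x / 4 := by field_simp; ring

theorem correctedKowE_withinFactor (hlam : 0 < lam) (hm : 0 < m) (hmc : m ≤ √(c x))
    (hc' : |c' x| ≤ lam * m ^ 3) :
    WithinFactor (4 / 3) (correctedKowE c c' lam u u' x) (kowE (c x) lam u u' x) := by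
  have h := abs_le.1 (abs_correctedKowE_sub_kowE_le (u := u) (u' := u') hlam hm hmc hc')
  have := kowE_nonneg (c x) lam u u' x
  constructor <;> linarith [h.1, h.2]

theorem abs_correctorCoeff_le {γ : ℝ} (hm : 0 < m) (hmc : m ≤ √(c x)) (hc' : |c' x| ≤ γ)
    (hc'' : |c'' x| ≤ γ ^ 2) :
    |c'' x / (2 * √(c x) ^ 3) - 3 * c' x ^ 2 / (4 * √(c x) ^ 5)|
      ≤ (1 / (2 * m ^ 3) + 3 / (4 * m ^ 5)) * γ ^ 2 := by
  have hs : 0 < √(c x) := hm.trans_le hmc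
  have hm3 : m ^ 3 ≤ √(c x) ^ 3 := pow_le_pow_left₀ hm.le hmc 3
  have hm5 : m ^ 5 ≤ √(c x) ^ 5 := pow_le_pow_left₀ hm.le hmc 5
  have hc'2 : c' x ^ 2 ≤ γ ^ 2 := by
    rw [← sq_abs]; exact pow_le_pow_left₀ (abs_nonneg _) hc' 2
  have h1 : |c'' x / (2 * √(c x) ^ 3)| ≤ γ ^ 2 / (2 * m ^ 3) := by
    rw [abs_div, abs_of_pos (a := 2 * √(c x) ^ 3) (by positivity)]
    exact div_le_div₀ (sq_nonneg _) hc'' (by positivity) (by linarith)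
  have h2 : |3 * c' x ^ 2 / (4 * √(c x) ^ 5)| ≤ 3 * γ ^ 2 / (4 * m ^ 5) := by
    rw [abs_div, abs_of_pos (a := 4 * √(c x) ^ 5) (by positivity),
      abs_of_nonneg (a := 3 * c' x ^ 2) (by positivity)]
    exact div_le_div₀ (by positivity) (by linarith) (by positivity) (by linarith)
  calc _ ≤ |c'' x / (2 * √(c x) ^ 3)| + |3 * c' x ^ 2 / (4 * √(c x) ^ 5)| := abs_sub _ _
    _ ≤ γ ^ 2 / (2 * m ^ 3) + 3 * γ ^ 2 / (4 * m ^ 5) := add_le_add h1 h2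
    _ = _ := by ring

theorem abs_deriv_correctedKowE_le {γ : ℝ} (hlam : 0 < lam) (hm : 0 < m) (hmc : m ≤ √(c x))
    (hc'γ : |c' x| ≤ γ) (hc''γ : |c'' x| ≤ γ ^ 2) (hc'lam : |c' x| ≤ lam * m ^ 3) :
    |(c'' x / (2 * √(c x) ^ 3) - 3 * c' x ^ 2 / (4 * √(c x) ^ 5)) * (u x * u' x)|
      ≤ (1 / (2 * m ^ 3) + 3 / (4 * m ^ 5)) / lam * γ ^ 2 * correctedKowE c c' lam u u' x := by
  have hcx : 0 < c x := sqrt_pos.1 (hm.trans_le hmc)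
  have hF := (correctedKowE_withinFactor (u := u) (u' := u') hlam hm hmc hc'lam).2
  have hE := kowE_nonneg (c x) lam u u' x
  calc _ = |c'' x / (2 * √(c x) ^ 3) - 3 * c' x ^ 2 / (4 * √(c x) ^ 5)| * |u x * u' x| :=
        abs_mul _ _
    _ ≤ (1 / (2 * m ^ 3) + 3 / (4 * m ^ 5)) * γ ^ 2 * (kowE (c x) lam u u' x / (2 * lam)) :=
        mul_le_mul (abs_correctorCoeff_le hm hmc hc'γ hc''γ) (abs_mul_le_kowE_div hlam hcx)
          (abs_nonneg _) (by positivity)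
    _ ≤ (1 / (2 * m ^ 3) + 3 / (4 * m ^ 5)) * γ ^ 2 * (correctedKowE c c' lam u u' x / lam) := by
        refine mul_le_mul_of_nonneg_left ?_ (by positivity)
        rw [div_le_div_iff₀ (by positivity) hlam]
        nlinarith
    _ = _ := by ring

end AlongSolutions

theorem integral_rpow_neg_le {a b p : ℝ} (ha : 0 < a) (hab : a ≤ b) (hp : 1 < p) :
    ∫ x in a..b, x ^ (-p) ≤ a ^ (1 - p) / (p - 1) := by
  rw [integral_rpow (Or.inr ⟨by linarith, notMem_uIcc_of_lt ha (ha.trans_le hab)⟩)]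
  have hb : 0 < b ^ (-p + 1) := rpow_pos_of_pos (ha.trans_le hab) _
  rw [← neg_div_neg_eq, neg_sub, neg_add', neg_neg, show 1 - p = -p + 1 by ring]
  exact div_le_div_of_nonneg_right (by linarith) (by linarith)

theorem kowE_withinFactor_of_small_freq {t0 t m lam lam0 S0 cinf : ℝ} {c u u' : ℝ → ℝ}
    (hm : 0 < m) (hmc : m ≤ √cinf) (hlam : 0 ≤ lam) (hlam0 : lam ≤ lam0)
    (hc : ContinuousOn c (Ici t0))
    (hu : ∀ x ∈ Ici t0, HasDerivWithinAt u (u' x) (Ici t0) x)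
    (hu' : ∀ x ∈ Ici t0, HasDerivWithinAt u' (-(lam ^ 2 * c x * u x)) (Ici t0) x)
    (ht : t0 ≤ t) (hS : ∫ x in t0..t, |c x - cinf| ≤ S0) :
    WithinFactor (exp (lam0 * S0 / m)) (kowE cinf lam u u' t) (kowE cinf lam u u' t0) := by
  have hs : 0 < √cinf := hm.trans_le hmc
  have hcinf : 0 < cinf := sqrt_pos.1 hs
  have hE := fun x hx => hasDerivWithinAt_kowE hcinf (hu x hx) (hu' x hx)
  have hbound : ∀ x ∈ Ioo t0 t, |2 * lam ^ 2 * (cinf - c x) * (u x * u' x) / √cinf|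
      ≤ lam / √cinf * |c x - cinf| * kowE cinf lam u u' x := fun x _ => calc
    _ = lam / √cinf * |c x - cinf| * (2 * lam * |u x * u' x|) := by
        rw [abs_div, abs_mul, abs_mul, abs_of_pos hs, abs_sub_comm,
          abs_of_nonneg (by positivity : (0 : ℝ) ≤ 2 * lam ^ 2)]
        ring
    _ ≤ _ := mul_le_mul_of_nonneg_left (two_mul_abs_mul_le_kowE hcinf x)
        (mul_nonneg (div_nonneg hlam hs.le) (abs_nonneg _))
  have hgron := withinFactor_exp_integral_of_abs_deriv_le
    (φ := fun x => lam / √cinf * |c x - cinf|) ht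
    (fun x hx => (hE x hx.1).continuousWithinAt.mono Icc_subset_Ici_self)
    (fun x hx => (hE x hx.1.le).hasDerivAt (Ici_mem_nhds hx.1))
    (continuousOn_const.mul ((hc.mono Icc_subset_Ici_self).sub continuousOn_const).abs) hbound
  refine hgron.mono (kowE_nonneg _ _ _ _ _) (kowE_nonneg _ _ _ _ _) (exp_le_exp.2 ?_)
  rw [intervalIntegral.integral_const_mul]
  have hint : 0 ≤ ∫ x in t0..t, |c x - cinf| :=
    intervalIntegral.integral_nonneg ht fun _ _ => abs_nonneg _
  calc lam / √cinf * ∫ x in t0..t, |c x - cinf| ≤ lam0 / m * S0 :=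
        mul_le_mul (div_le_div₀ (hlam.trans hlam0) hlam0 hm hmc) hS hint
          (div_nonneg (hlam.trans hlam0) hm.le)
    _ = lam0 * S0 / m := by ring

theorem kowE_withinFactor_of_large_freq {t0 t β m M lam lam0 cinf : ℝ}
    {c c' c'' u u' : ℝ → ℝ} (ht0 : 0 < t0) (hβ : 1 / 2 < β) (hm : 0 < m)
    (hcm : ∀ x ∈ Ici t0, m ≤ √(c x) ∧ √(c x) ≤ M) (hcinf : m ≤ √cinf ∧ √cinf ≤ M)
    (hc : ∀ x ∈ Ici t0, HasDerivWithinAt c (c' x) (Ici t0) x)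
    (hc' : ∀ x ∈ Ici t0, HasDerivWithinAt c' (c'' x) (Ici t0) x)
    (hγ : ∀ x ∈ Ici t0, |c' x| ≤ x ^ (-β) ∧ |c'' x| ≤ (x ^ (-β)) ^ 2)
    (hlam0 : 0 < lam0) (hγlam0 : t0 ^ (-β) ≤ lam0 * m ^ 3) (hlam : lam0 ≤ lam)
    (hu : ∀ x ∈ Ici t0, HasDerivWithinAt u (u' x) (Ici t0) x)
    (hu' : ∀ x ∈ Ici t0, HasDerivWithinAt u' (-(lam ^ 2 * c x * u x)) (Ici t0) x)
    (ht : t0 ≤ t) :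
    WithinFactor (16 / 9 * (M / m) ^ 2 *
        exp ((1 / (2 * m ^ 3) + 3 / (4 * m ^ 5)) / lam0 * (t0 ^ (1 - 2 * β) / (2 * β - 1))))
      (kowE cinf lam u u' t) (kowE cinf lam u u' t0) := by
  set K := 1 / (2 * m ^ 3) + 3 / (4 * m ^ 5)
  have hK : 0 < K := by positivity
  have hlam' : 0 < lam := hlam0.trans_le hlam
  have hMm : 0 ≤ M / m := div_nonneg (hm.le.trans (hcinf.1.trans hcinf.2)) hm.le
  have hc'lam : ∀ x ∈ Ici t0, |c' x| ≤ lam * m ^ 3 := fun x hx => calc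
    |c' x| ≤ x ^ (-β) := (hγ x hx).1
    _ ≤ t0 ^ (-β) := rpow_le_rpow_of_nonpos ht0 hx (by linarith)
    _ ≤ lam0 * m ^ 3 := hγlam0
    _ ≤ lam * m ^ 3 := by gcongr
  have hF := fun x hx => hasDerivWithinAt_correctedKowE (sqrt_pos.1 (hm.trans_le (hcm x hx).1))
    (hc x hx) (hc' x hx) (hu x hx) (hu' x hx)
  have hFF := withinFactor_exp_integral_of_abs_deriv_le (φ := fun x => K / lam * (x ^ (-β)) ^ 2) ht
    (fun x hx => (hF x hx.1).continuousWithinAt.mono Icc_subset_Ici_self)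
    (fun x hx => (hF x hx.1.le).hasDerivAt (Ici_mem_nhds hx.1))
    (continuousOn_const.mul ((continuousOn_id.rpow_const fun x hx =>
      Or.inl (ht0.trans_le hx.1).ne').pow 2))
    (fun x hx => abs_deriv_correctedKowE_le hlam' hm (hcm x hx.1.le).1 (hγ x hx.1.le).1
      (hγ x hx.1.le).2 (hc'lam x hx.1.le))
  have hI : ∫ x in t0..t, K / lam * (x ^ (-β)) ^ 2
      ≤ K / lam0 * (t0 ^ (1 - 2 * β) / (2 * β - 1)) := by
    have hsq : ∫ x in t0..t, (x ^ (-β)) ^ 2 = ∫ x in t0..t, x ^ (-(2 * β)) :=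
      intervalIntegral.integral_congr fun x hx => by
        rw [← rpow_mul_natCast (ht0.trans_le (uIcc_of_le ht ▸ hx).1).le]
        ring_nf
    rw [intervalIntegral.integral_const_mul, hsq]
    exact mul_le_mul (div_le_div_of_nonneg_left hK.le hlam0 hlam)
      (integral_rpow_neg_le ht0 ht (by linarith))
      (intervalIntegral.integral_nonneg ht fun x hx => (rpow_pos_of_pos (ht0.trans_le hx.1) _).le)
      (by positivity)
  have hEt := kowE_withinFactor (u := u) (u' := u') (lam := lam) hm hcinf (hcm t ht) t
  have hE0 := kowE_withinFactor (u := u) (u' := u') (lam := lam) hm (hcm t0 self_mem_Ici) hcinf t0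
  have hFt := (correctedKowE_withinFactor (u := u) (u' := u') hlam' hm (hcm t ht).1
    (hc'lam t ht)).symm
  have hF0 := correctedKowE_withinFactor (u := u) (u' := u') hlam' hm (hcm t0 self_mem_Ici).1
    (hc'lam t0 self_mem_Ici)
  have hchain := ((((hEt.trans hMm (by norm_num) hFt).trans (by positivity) (exp_pos _).le
    hFF).trans (by positivity) (by norm_num) hF0).trans (by positivity) hMm hE0)
  refine hchain.mono (kowE_nonneg _ _ _ _ _) (kowE_nonneg _ _ _ _ _) ?_
  calc M / m * (4 / 3) * exp (∫ x in t0..t, K / lam * (x ^ (-β)) ^ 2) * (4 / 3) * (M / m)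
      = 16 / 9 * (M / m) ^ 2 * exp (∫ x in t0..t, K / lam * (x ^ (-β)) ^ 2) := by ring
    _ ≤ _ := by gcongr

theorem GEC_case_beta_gt_half_general
    (t0 Λ1 Λ2 β : ℝ) (ht0 : 0 < t0) (hΛ1 : 0 < Λ1)
    (hβ : 1 / 2 < β)
    (S : ℝ → ℝ) :
    ∃ H0 : ℝ, 0 < H0 ∧
      ∀ (c c' c'' : ℝ → ℝ) (cinf : ℝ),
        (∀ t ∈ Ici t0, HasDerivWithinAt c (c' t) (Ici t0) t) →
        (∀ t ∈ Ici t0, HasDerivWithinAt c' (c'' t) (Ici t0) t) →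
        ContinuousOn c'' (Ici t0) →
        (∀ t ∈ Ici t0, Λ1 ≤ c t ∧ c t ≤ Λ2) →
        cinf ∈ Icc Λ1 Λ2 →
        (∀ t ∈ Ici t0, ∀ b ≥ t, (∫ τ in t..b, |c τ - cinf|) ≤ S t) →
        (∀ t ∈ Ici t0, |c' t| ≤ t ^ (-β) ∧ |c'' t| ≤ (t ^ (-β)) ^ 2) →
        ∀ lam : ℝ, 0 < lam →
        ∀ u u' : ℝ → ℝ,
          (∀ t ∈ Ici t0, HasDerivWithinAt u (u' t) (Ici t0) t) →
          (∀ t ∈ Ici t0, HasDerivWithinAt u' (-(lam ^ 2 * c t * u t)) (Ici t0) t) →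
          ∀ t ∈ Ici t0,
            (1 / H0) * kowE cinf lam u u' t0 ≤ kowE cinf lam u u' t ∧
            kowE cinf lam u u' t ≤ H0 * kowE cinf lam u u' t0 := by
  set m := √Λ1
  set M := √Λ2
  have hm : 0 < m := sqrt_pos.2 hΛ1
  set lam0 := t0 ^ (-β) / m ^ 3
  have hlam0 : 0 < lam0 := div_pos (rpow_pos_of_pos ht0 _) (pow_pos hm 3)
  set H0 := max (exp (lam0 * S t0 / m)) (16 / 9 * (M / m) ^ 2 *
    exp ((1 / (2 * m ^ 3) + 3 / (4 * m ^ 5)) / lam0 * (t0 ^ (1 - 2 * β) / (2 * β - 1))))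
  have hH0 : 0 < H0 := lt_max_of_lt_left (exp_pos _)
  refine ⟨H0, hH0, ?_⟩
  intro c c' c'' cinf hc hc' _ hcb hcinf hstab hγ lam hlam u u' hu hu' t ht
  have hcm : ∀ x ∈ Ici t0, m ≤ √(c x) ∧ √(c x) ≤ M := fun x hx =>
    ⟨sqrt_le_sqrt (hcb x hx).1, sqrt_le_sqrt (hcb x hx).2⟩
  have hcinfm : m ≤ √cinf ∧ √cinf ≤ M := ⟨sqrt_le_sqrt hcinf.1, sqrt_le_sqrt hcinf.2⟩
  have hE : WithinFactor H0 (kowE cinf lam u u' t) (kowE cinf lam u u' t0) := by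
    rcases le_or_gt lam lam0 with hsmall | hlarge
    · exact (kowE_withinFactor_of_small_freq hm hcinfm.1 hlam.le hsmall
        (fun x hx => (hc x hx).continuousWithinAt) hu hu' ht (hstab t0 self_mem_Ici t ht)).mono
        (kowE_nonneg _ _ _ _ _) (kowE_nonneg _ _ _ _ _) (le_max_left _ _)
    · exact (kowE_withinFactor_of_large_freq ht0 hβ hm hcm hcinfm hc hc' hγ hlam0
        (div_mul_cancel₀ _ (pow_pos hm 3).ne').ge hlarge.le hu hu' ht).mono
        (kowE_nonneg _ _ _ _ _) (kowE_nonneg _ _ _ _ _) (le_max_right _ _)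
  exact ⟨hE.one_div_mul_le hH0, hE.1⟩

theorem GEC_case_beta_gt_half
    (t0 Λ1 Λ2 β : ℝ) (ht0 : 0 < t0) (hΛ1 : 0 < Λ1) (hΛ12 : Λ1 ≤ Λ2)
    (hβ : 1 / 2 < β)
    (S : ℝ → ℝ)
    (hS_cont : ContinuousOn S (Ici t0)) (hS_anti : AntitoneOn S (Ici t0))
    (hS_lim : Tendsto S atTop (nhds 0)) :
    ∃ H0 : ℝ, 0 < H0 ∧
      ∀ (c c' c'' : ℝ → ℝ) (cinf : ℝ),
        (∀ t ∈ Ici t0, HasDerivWithinAt c (c' t) (Ici t0) t) →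
        (∀ t ∈ Ici t0, HasDerivWithinAt c' (c'' t) (Ici t0) t) →
        ContinuousOn c'' (Ici t0) →
        (∀ t ∈ Ici t0, Λ1 ≤ c t ∧ c t ≤ Λ2) →
        cinf ∈ Icc Λ1 Λ2 →
        (∀ t ∈ Ici t0, ∀ b ≥ t, (∫ τ in t..b, |c τ - cinf|) ≤ S t) →
        (∀ t ∈ Ici t0, |c' t| ≤ t ^ (-β) ∧ |c'' t| ≤ (t ^ (-β)) ^ 2) →
        ∀ lam : ℝ, 0 < lam →
        ∀ u u' : ℝ → ℝ,
          (∀ t ∈ Ici t0, HasDerivWithinAt u (u' t) (Ici t0) t) →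
          (∀ t ∈ Ici t0, HasDerivWithinAt u' (-(lam ^ 2 * c t * u t)) (Ici t0) t) →
          ∀ t ∈ Ici t0,
            (1 / H0) * kowE cinf lam u u' t0 ≤ kowE cinf lam u u' t ∧
            kowE cinf lam u u' t ≤ H0 * kowE cinf lam u u' t0 :=
  GEC_case_beta_gt_half_general t0 Λ1 Λ2 β ht0 hΛ1 hβ S
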